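/- arXiv:2207.03706 — 4 statements merged into one kernel-verified Lean document; each statement's English description precedes it below -/
import Mathlib

section
/- Under assumptions (A1)–(A5), for i=1,2 let φ_i ∈ L^∞(Ω;ℝ^L) with ‖φ_i‖_{L^∞} ≤ R, and let ū_i ∈ H¹_{D̄}(Ω;ℝ^d) be the unique weak solutions of the Stage 1 elasticity system ∫_Ω C̄(φ_i)ε(ū_i):ε(ζ) dx = ∫_Ω F̄·ζ dx − ∫_Ω C̄(φ_i)ε(H̄):ε(ζ) dx + ⟨ḡ,ζ⟩ for all ζ ∈ H¹_{D̄}, with the same data F̄, ḡ, H̄. Then there is a constant C independent of φ₁, φ₂ with ‖ū₁ − ū₂‖_{H¹(Ω)} ≤ C‖φ₁ − φ₂‖_{L^∞(Ω)}. -/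
open scoped RealInnerProductSpace

/-- **Lipschitz continuous dependence of the Stage 1 displacement on the phase field**
(first estimate of Theorem 3.2), in abstract Hilbert-space form.

`V` models `H¹_{D̄}(Ω;ℝ^d)` with Korn's inequality `hKorn` (assumption (A1)), `W` models
`L²(Ω;ℝ^{d×d}_sym)` and `eps` the symmetrized gradient.  `P` models `L^∞(Ω;ℝ^L)` and
`Cop φ` is the multiplication operator `A ↦ C̄(φ(x))A`; assumption (A2) yields the uniform
coercivity `hcoer`, the uniform bound `hbd` and the Lipschitz estimate `hlip`.  The data
consist of a functional `Fd ∈ V*` (combining the body force `F̄` and the surface load `ḡ`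
of (A5)) and the strain `epsH = ε(H̄) ∈ W` of the extension of the Dirichlet datum.
`sol φ u` is the weak formulation \eqref{wf:sys:1}.

Conclusion: there is `C > 0`, independent of `φ₁, φ₂`, such that whenever
`‖φ_i‖_{L^∞} ≤ R` and `ū_i` solves the system for `φ_i` (same data), then
`‖ū₁ − ū₂‖_{H¹} ≤ C ‖φ₁ − φ₂‖_{L^∞}`. -/
theorem stage1_lipschitz_dependence
    {V W P : Type*}
    [NormedAddCommGroup V] [InnerProductSpace ℝ V] [CompleteSpace V]
    [NormedAddCommGroup W] [InnerProductSpace ℝ W] [CompleteSpace W]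
    [NormedAddCommGroup P] [NormedSpace ℝ P]
    (eps : V →L[ℝ] W)
    (CK : ℝ) (hCK : 0 < CK) (hKorn : ∀ v : V, ‖v‖ ≤ CK * ‖eps v‖)
    (Cop : P → (W →L[ℝ] W))
    (C0 C1 Clip R : ℝ) (hC0 : 0 < C0) (hR : 0 < R)
    (hcoer : ∀ (φ : P) (w : W), C0 * ‖w‖ ^ 2 ≤ ⟪Cop φ w, w⟫)
    (hbd : ∀ φ : P, ‖Cop φ‖ ≤ C1)
    (hlip : ∀ φ₁ φ₂ : P, ‖Cop φ₁ - Cop φ₂‖ ≤ Clip * ‖φ₁ - φ₂‖)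
    (Fd : V →L[ℝ] ℝ) (epsH : W) :
    ∃ C : ℝ, 0 < C ∧
      ∀ (φ₁ φ₂ : P) (u₁ u₂ : V), ‖φ₁‖ ≤ R → ‖φ₂‖ ≤ R →
        (∀ ζ : V, ⟪Cop φ₁ (eps u₁), eps ζ⟫ = Fd ζ - ⟪Cop φ₁ epsH, eps ζ⟫) →
        (∀ ζ : V, ⟪Cop φ₂ (eps u₂), eps ζ⟫ = Fd ζ - ⟪Cop φ₂ epsH, eps ζ⟫) →
        ‖u₁ - u₂‖ ≤ C * ‖φ₁ - φ₂‖ := by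
  -- nonnegativity of C1
  have hC1 : 0 ≤ C1 := le_trans (norm_nonneg _) (hbd 0)
  set Cl : ℝ := max Clip 0 with hCl
  have hCl0 : 0 ≤ Cl := le_max_right _ _
  have hlip' : ∀ φ₁ φ₂ : P, ‖Cop φ₁ - Cop φ₂‖ ≤ Cl * ‖φ₁ - φ₂‖ := fun φ₁ φ₂ =>
    (hlip φ₁ φ₂).trans (mul_le_mul_of_nonneg_right (le_max_left _ _) (norm_nonneg _))
  -- uniform bound on strains of solutions
  set K : ℝ := CK * ‖Fd‖ + C1 * ‖epsH‖ with hK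
  have hK0 : 0 ≤ K := by positivity
  -- quadratic absorption lemma
  have quad : ∀ x b : ℝ, 0 ≤ x → 0 ≤ b → C0 * x ^ 2 ≤ b * x → x ≤ b / C0 := by
    intro x b hx hb h
    rcases hx.eq_or_lt with h0 | h0
    · rw [← h0]; positivity
    · rw [le_div_iff₀ hC0]
      have := (mul_le_mul_iff_of_pos_right h0).mp (by nlinarith : (C0 * x) * x ≤ b * x)
      linarith [this]
  set M : ℝ := K / C0 with hM
  have hM0 : 0 ≤ M := by positivity
  refine ⟨CK * (Cl * (M + ‖epsH‖)) / C0 + 1, by positivity, ?_⟩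
  intro φ₁ φ₂ u₁ u₂ _ _ h₁ h₂
  -- bound on ‖eps u₂‖
  have hu₂ : ‖eps u₂‖ ≤ M := by
    refine quad _ _ (norm_nonneg _) hK0 ?_
    calc C0 * ‖eps u₂‖ ^ 2 ≤ ⟪Cop φ₂ (eps u₂), eps u₂⟫ := hcoer _ _
      _ = Fd u₂ - ⟪Cop φ₂ epsH, eps u₂⟫ := h₂ u₂
      _ ≤ ‖Fd‖ * ‖u₂‖ + ‖Cop φ₂ epsH‖ * ‖eps u₂‖ := by
          have h1 : Fd u₂ ≤ ‖Fd‖ * ‖u₂‖ := le_trans (le_abs_self _) (Fd.le_opNorm u₂)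
          have h2 : -⟪Cop φ₂ epsH, eps u₂⟫ ≤ ‖Cop φ₂ epsH‖ * ‖eps u₂‖ := by
            have := abs_real_inner_le_norm (Cop φ₂ epsH) (eps u₂)
            linarith [neg_abs_le ⟪Cop φ₂ epsH, eps u₂⟫]
          linarith
      _ ≤ ‖Fd‖ * (CK * ‖eps u₂‖) + (C1 * ‖epsH‖) * ‖eps u₂‖ := by
          gcongr
          · exact hKorn u₂
          · exact ((Cop φ₂).le_opNorm epsH).trans
              (mul_le_mul_of_nonneg_right (hbd φ₂) (norm_nonneg _))
      _ = K * ‖eps u₂‖ := by ring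
  set ζ : V := u₁ - u₂ with hζ
  set w : W := eps ζ with hw
  have hw' : w = eps u₁ - eps u₂ := by rw [hw, hζ, map_sub]
  -- key identity
  have key : ⟪Cop φ₁ w, w⟫ = ⟪(Cop φ₂ - Cop φ₁) (eps u₂ + epsH), w⟫ := by
    have e1 := h₁ (u₁ - u₂)
    have e2 := h₂ (u₁ - u₂)
    rw [hw']
    simp only [ContinuousLinearMap.sub_apply, map_add, map_sub, inner_sub_left,
      inner_sub_right, inner_add_left] at *
    linarith
  -- strain estimate
  have hwb : ‖w‖ ≤ (Cl * (M + ‖epsH‖) * ‖φ₁ - φ₂‖) / C0 := by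
    refine quad _ _ (norm_nonneg _) (by positivity) ?_
    calc C0 * ‖w‖ ^ 2 ≤ ⟪Cop φ₁ w, w⟫ := hcoer _ _
      _ = ⟪(Cop φ₂ - Cop φ₁) (eps u₂ + epsH), w⟫ := key
      _ ≤ ‖(Cop φ₂ - Cop φ₁) (eps u₂ + epsH)‖ * ‖w‖ :=
          le_trans (le_abs_self _) (abs_real_inner_le_norm _ _)
      _ ≤ (Cl * ‖φ₂ - φ₁‖) * ‖eps u₂ + epsH‖ * ‖w‖ := by
          gcongr
          exact ((Cop φ₂ - Cop φ₁).le_opNorm _).trans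
            (mul_le_mul_of_nonneg_right (hlip' φ₂ φ₁) (norm_nonneg _))
      _ ≤ (Cl * ‖φ₁ - φ₂‖) * (M + ‖epsH‖) * ‖w‖ := by
          rw [norm_sub_rev φ₂ φ₁]
          gcongr
          exact (norm_add_le _ _).trans (by gcongr)
      _ = Cl * (M + ‖epsH‖) * ‖φ₁ - φ₂‖ * ‖w‖ := by ring
  calc ‖u₁ - u₂‖ ≤ CK * ‖w‖ := hKorn ζ
    _ ≤ CK * ((Cl * (M + ‖epsH‖) * ‖φ₁ - φ₂‖) / C0) := by gcongr
    _ = (CK * (Cl * (M + ‖epsH‖)) / C0) * ‖φ₁ - φ₂‖ := by ring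
    _ ≤ (CK * (Cl * (M + ‖epsH‖)) / C0 + 1) * ‖φ₁ - φ₂‖ := by
        have := norm_nonneg (φ₁ - φ₂); nlinarith
end

section
/- Under assumptions (A1)–(A5), for i=1,2 let (ū_i, û_i) solve the coupled two-stage elasticity system associated to φ_i (with ‖φ_i‖_{L^∞} ≤ R and identical data). Then there exists C > 0 independent of the differences such that ‖û₁ − û₂‖_{H¹(Ω)} ≤ C‖ε(ū₁ − ū₂)‖_{L²(Ω)} + C‖φ₁ − φ₂‖_{L^∞(Ω)}, and consequently ‖û₁ − û₂‖_{H¹(Ω)} ≤ C‖φ₁ − φ₂‖_{L^∞(Ω)}. -/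
open scoped RealInnerProductSpace

private lemma opb' {W : Type*} [NormedAddCommGroup W] [InnerProductSpace ℝ W]
    (A : W →L[ℝ] W) {c : ℝ} (hA : ‖A‖ ≤ c) (x : W) : ‖A x‖ ≤ c * ‖x‖ :=
  (A.le_opNorm x).trans (mul_le_mul_of_nonneg_right hA (norm_nonneg x))

private lemma innb' {W : Type*} [NormedAddCommGroup W] [InnerProductSpace ℝ W] (x y : W) :
    -(‖x‖ * ‖y‖) ≤ ⟪x, y⟫ ∧ ⟪x, y⟫ ≤ ‖x‖ * ‖y‖ :=
  abs_le.mp (abs_real_inner_le_norm x y)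

private lemma quadb' {x B C0 : ℝ} (hC0 : 0 < C0) (hB : 0 ≤ B) (hx : 0 ≤ x)
    (h : C0 * x ^ 2 ≤ B * x) : x ≤ B / C0 := by
  rcases eq_or_lt_of_le hx with h0 | h0
  · rw [← h0]; positivity
  · rw [le_div_iff₀ hC0]; nlinarith

private lemma assemble' {q c k e a : ℝ} (hq : 0 ≤ q) (hc : 0 ≤ c) (hk : 0 ≤ k)
    (he : 0 ≤ e) (ha : 0 ≤ a) :
    q * (c * e + k * a) ≤ (q * (c + k) + 1) * (e + a) := by
  nlinarith [mul_nonneg hq (mul_nonneg hc ha), mul_nonneg hq (mul_nonneg hk he),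
    add_nonneg he ha]

private lemma assemble2' {Cf L e a : ℝ} (hCf : 0 < Cf) (hL : 0 ≤ L)
    (he : 0 ≤ e) (ha : 0 ≤ a) (hea : e ≤ L * a) :
    Cf * (e + a) ≤ Cf * (L + 1) * a ∧ Cf * (e + a) ≤ Cf * (L + 1) * (e + a) := by
  constructor
  · nlinarith
  · nlinarith [mul_nonneg hCf.le hL, add_nonneg he ha]

set_option maxHeartbeats 1000000 in
/-- **Continuous dependence of the Stage 2 displacement** (second estimate of Theorem 3.2),
in abstract Hilbert-space form.

`V1, V2` model `H¹_{D̄}(Ω;ℝ^d)` and `H¹_{D̂}(Ω;ℝ^d)` (with Korn's inequalities), `W` models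
`L²(Ω;ℝ^{d×d}_sym)`, `eps1, eps2` the symmetrized gradients.  `Cb φ, Ch φ` are the
multiplication operators by `C̄(φ(x))`, `Ĉ(φ(x))` (assumption (A2): uniformly coercive,
bounded and Lipschitz in `‖φ‖_{L^∞}`), and `chiOp φ` is multiplication by the fixity
`χ(φ(x))` (assumption (A4): `0 ≤ χ ≤ χ₀`, Lipschitz).  `F1, F2 ∈ V*` are the data
functionals and `epsH1 = ε(H̄), epsH2 = ε(Ĥ) ∈ W` the strains of the Dirichlet extensions
(assumptions (A1), (A5)).  `(ū_i, û_i)` solve the coupled two-stage weak formulations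
\eqref{wf:sys:1}-\eqref{wf:sys:2} for `φ_i` with the same data, `‖φ_i‖_{L^∞} ≤ R`.

Conclusion: `‖û₁ − û₂‖_{H¹} ≤ C(‖ε(ū₁ − ū₂)‖_{L²} + ‖φ₁ − φ₂‖_{L^∞})`, and consequently
`‖û₁ − û₂‖_{H¹} ≤ C ‖φ₁ − φ₂‖_{L^∞}`, with `C` independent of the differences. -/
theorem stage2_continuous_dependence
    {V1 V2 W P : Type*}
    [NormedAddCommGroup V1] [InnerProductSpace ℝ V1] [CompleteSpace V1]
    [NormedAddCommGroup V2] [InnerProductSpace ℝ V2] [CompleteSpace V2]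
    [NormedAddCommGroup W] [InnerProductSpace ℝ W] [CompleteSpace W]
    [NormedAddCommGroup P] [NormedSpace ℝ P]
    (eps1 : V1 →L[ℝ] W) (eps2 : V2 →L[ℝ] W)
    (CK : ℝ) (hCK : 0 < CK)
    (hKorn1 : ∀ v : V1, ‖v‖ ≤ CK * ‖eps1 v‖) (hKorn2 : ∀ v : V2, ‖v‖ ≤ CK * ‖eps2 v‖)
    (Cb Ch chiOp : P → (W →L[ℝ] W))
    (C0 C1 Clip χ0 R : ℝ) (hC0 : 0 < C0) (hR : 0 < R)
    (hCbcoer : ∀ (φ : P) (w : W), C0 * ‖w‖ ^ 2 ≤ ⟪Cb φ w, w⟫)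
    (hChcoer : ∀ (φ : P) (w : W), C0 * ‖w‖ ^ 2 ≤ ⟪Ch φ w, w⟫)
    (hCbbd : ∀ φ : P, ‖Cb φ‖ ≤ C1) (hChbd : ∀ φ : P, ‖Ch φ‖ ≤ C1)
    (hchibd : ∀ φ : P, ‖chiOp φ‖ ≤ χ0)
    (hCblip : ∀ φ₁ φ₂ : P, ‖Cb φ₁ - Cb φ₂‖ ≤ Clip * ‖φ₁ - φ₂‖)
    (hChlip : ∀ φ₁ φ₂ : P, ‖Ch φ₁ - Ch φ₂‖ ≤ Clip * ‖φ₁ - φ₂‖)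
    (hchilip : ∀ φ₁ φ₂ : P, ‖chiOp φ₁ - chiOp φ₂‖ ≤ Clip * ‖φ₁ - φ₂‖)
    (F1 : V1 →L[ℝ] ℝ) (F2 : V2 →L[ℝ] ℝ) (epsH1 epsH2 : W) :
    ∃ C : ℝ, 0 < C ∧
      ∀ (φ₁ φ₂ : P) (u₁ u₂ : V1) (v₁ v₂ : V2), ‖φ₁‖ ≤ R → ‖φ₂‖ ≤ R →
        (∀ ζ : V1, ⟪Cb φ₁ (eps1 u₁), eps1 ζ⟫ = F1 ζ - ⟪Cb φ₁ epsH1, eps1 ζ⟫) →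
        (∀ ζ : V1, ⟪Cb φ₂ (eps1 u₂), eps1 ζ⟫ = F1 ζ - ⟪Cb φ₂ epsH1, eps1 ζ⟫) →
        (∀ ζ : V2, ⟪Ch φ₁ (eps2 v₁), eps2 ζ⟫ - ⟪Ch φ₁ (chiOp φ₁ (eps1 u₁)), eps2 ζ⟫ =
          F2 ζ + ⟪Ch φ₁ epsH2, eps2 ζ⟫ - ⟪Ch φ₁ (chiOp φ₁ epsH1), eps2 ζ⟫) →
        (∀ ζ : V2, ⟪Ch φ₂ (eps2 v₂), eps2 ζ⟫ - ⟪Ch φ₂ (chiOp φ₂ (eps1 u₂)), eps2 ζ⟫ =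
          F2 ζ + ⟪Ch φ₂ epsH2, eps2 ζ⟫ - ⟪Ch φ₂ (chiOp φ₂ epsH1), eps2 ζ⟫) →
        ‖v₁ - v₂‖ ≤ C * (‖eps1 (u₁ - u₂)‖ + ‖φ₁ - φ₂‖) ∧
        ‖v₁ - v₂‖ ≤ C * ‖φ₁ - φ₂‖ := by
  classical
  have hC1 : 0 ≤ C1 := le_trans (norm_nonneg _) (hCbbd 0)
  have hχ0 : 0 ≤ χ0 := le_trans (norm_nonneg _) (hchibd 0)
  set Cl : ℝ := max Clip 0 with hCl
  have hCl0 : 0 ≤ Cl := le_max_right _ _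
  -- data constants
  set M1 : ℝ := (CK * ‖F1‖ + C1 * ‖epsH1‖) / C0 with hM1def
  have hM1 : 0 ≤ M1 := div_nonneg
    (add_nonneg (mul_nonneg hCK.le (norm_nonneg _)) (mul_nonneg hC1 (norm_nonneg _))) hC0.le
  set M2 : ℝ := (CK * ‖F2‖ + C1 * ‖epsH2‖ + C1 * (χ0 * M1) + C1 * (χ0 * ‖epsH1‖)) / C0 with hM2def
  have hM2 : 0 ≤ M2 := by
    apply div_nonneg _ hC0.le
    have := norm_nonneg F2; have := norm_nonneg epsH1; have := norm_nonneg epsH2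
    nlinarith [mul_nonneg hC1 hχ0, mul_nonneg (mul_nonneg hC1 hχ0) hM1]
  set L : ℝ := Cl * (‖epsH1‖ + M1) / C0 with hLdef
  have hL : 0 ≤ L := div_nonneg (mul_nonneg hCl0 (add_nonneg (norm_nonneg _) hM1)) hC0.le
  set K : ℝ := C1 * (Cl * M1) + Cl * (χ0 * M1) + Cl * ‖epsH2‖
      + C1 * (Cl * ‖epsH1‖) + Cl * (χ0 * ‖epsH1‖) + Cl * M2 with hKdef
  have hK : 0 ≤ K := by
    have h1 := norm_nonneg epsH1; have h2 := norm_nonneg epsH2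
    nlinarith [mul_nonneg hC1 (mul_nonneg hCl0 hM1), mul_nonneg hCl0 (mul_nonneg hχ0 hM1),
      mul_nonneg hCl0 h2, mul_nonneg hC1 (mul_nonneg hCl0 h1),
      mul_nonneg hCl0 (mul_nonneg hχ0 h1), mul_nonneg hCl0 hM2]
  have hCχ : 0 ≤ C1 * χ0 := mul_nonneg hC1 hχ0
  set q : ℝ := CK / C0 with hqdef
  have hq : 0 ≤ q := div_nonneg hCK.le hC0.le
  set Cf : ℝ := q * (C1 * χ0 + K) + 1 with hCfdef
  have hCf1 : 1 ≤ Cf := by nlinarith [mul_nonneg hq (add_nonneg hCχ hK)]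
  have hCf0 : 0 < Cf := lt_of_lt_of_le one_pos hCf1
  refine ⟨Cf * (L + 1), by nlinarith, ?_⟩
  intro φ₁ φ₂ u₁ u₂ v₁ v₂ hφ₁ hφ₂ h1 h2 h3 h4
  set a : ℝ := ‖φ₁ - φ₂‖ with hadef
  have ha : 0 ≤ a := norm_nonneg _
  have hCblip' : ‖Cb φ₁ - Cb φ₂‖ ≤ Cl * a :=
    (hCblip φ₁ φ₂).trans (mul_le_mul_of_nonneg_right (le_max_left _ _) ha)
  have hChlip' : ‖Ch φ₁ - Ch φ₂‖ ≤ Cl * a :=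
    (hChlip φ₁ φ₂).trans (mul_le_mul_of_nonneg_right (le_max_left _ _) ha)
  have hchilip' : ‖chiOp φ₁ - chiOp φ₂‖ ≤ Cl * a :=
    (hchilip φ₁ φ₂).trans (mul_le_mul_of_nonneg_right (le_max_left _ _) ha)
  -- Step A: a priori bound on ‖eps1 u₂‖
  have hu2 : ‖eps1 u₂‖ ≤ M1 := by
    have hE := h2 u₂
    have hF : F1 u₂ ≤ ‖F1‖ * (CK * ‖eps1 u₂‖) := by
      have := F1.le_opNorm u₂
      have h2' : F1 u₂ ≤ ‖F1 u₂‖ := le_abs_self _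
      have := hKorn1 u₂
      nlinarith [norm_nonneg F1]
    have hI := (innb' (Cb φ₂ epsH1) (eps1 u₂)).1
    have hN : ‖Cb φ₂ epsH1‖ ≤ C1 * ‖epsH1‖ := opb' _ (hCbbd φ₂) _
    have hq2 : C0 * ‖eps1 u₂‖ ^ 2 ≤ (CK * ‖F1‖ + C1 * ‖epsH1‖) * ‖eps1 u₂‖ := by
      have hco := hCbcoer φ₂ (eps1 u₂)
      have j := mul_le_mul_of_nonneg_right hN (norm_nonneg (eps1 u₂))
      linarith
    have := quadb' hC0 (by positivity) (norm_nonneg _) hq2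
    rw [← hM1def] at this; exact this
  -- Step B: a priori bound on ‖eps2 v₂‖
  have hv2 : ‖eps2 v₂‖ ≤ M2 := by
    have hE := h4 v₂
    have hF : F2 v₂ ≤ ‖F2‖ * (CK * ‖eps2 v₂‖) := by
      have := F2.le_opNorm v₂
      have h2' : F2 v₂ ≤ ‖F2 v₂‖ := le_abs_self _
      have := hKorn2 v₂
      nlinarith [norm_nonneg F2]
    have hI1 := (innb' (Ch φ₂ (chiOp φ₂ (eps1 u₂))) (eps2 v₂)).2
    have hI2 := (innb' (Ch φ₂ epsH2) (eps2 v₂)).2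
    have hI3 := (innb' (Ch φ₂ (chiOp φ₂ epsH1)) (eps2 v₂)).1
    have hN1 : ‖Ch φ₂ (chiOp φ₂ (eps1 u₂))‖ ≤ C1 * (χ0 * M1) :=
      (opb' _ (hChbd φ₂) _).trans (mul_le_mul_of_nonneg_left
        ((opb' _ (hchibd φ₂) _).trans (mul_le_mul_of_nonneg_left hu2 hχ0)) hC1)
    have hN2 : ‖Ch φ₂ epsH2‖ ≤ C1 * ‖epsH2‖ := opb' _ (hChbd φ₂) _
    have hN3 : ‖Ch φ₂ (chiOp φ₂ epsH1)‖ ≤ C1 * (χ0 * ‖epsH1‖) :=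
      (opb' _ (hChbd φ₂) _).trans (mul_le_mul_of_nonneg_left (opb' _ (hchibd φ₂) _) hC1)
    have hq2 : C0 * ‖eps2 v₂‖ ^ 2 ≤
        (CK * ‖F2‖ + C1 * ‖epsH2‖ + C1 * (χ0 * M1) + C1 * (χ0 * ‖epsH1‖)) * ‖eps2 v₂‖ := by
      have hco := hChcoer φ₂ (eps2 v₂)
      have j1 := mul_le_mul_of_nonneg_right hN1 (norm_nonneg (eps2 v₂))
      have j2 := mul_le_mul_of_nonneg_right hN2 (norm_nonneg (eps2 v₂))
      have j3 := mul_le_mul_of_nonneg_right hN3 (norm_nonneg (eps2 v₂))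
      linarith
    have hBnn : (0:ℝ) ≤ CK * ‖F2‖ + C1 * ‖epsH2‖ + C1 * (χ0 * M1) + C1 * (χ0 * ‖epsH1‖) := by
      nlinarith [norm_nonneg F2, norm_nonneg epsH2, norm_nonneg epsH1,
        mul_nonneg hC1 (mul_nonneg hχ0 hM1), mul_nonneg hC1 (mul_nonneg hχ0 (norm_nonneg epsH1))]
    have := quadb' hC0 hBnn (norm_nonneg _) hq2
    rw [← hM2def] at this; exact this
  -- Step C: Stage 1 continuous dependence
  set d : W := eps1 u₁ - eps1 u₂ with hddef
  set e : ℝ := ‖d‖ with hedef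
  have he : 0 ≤ e := norm_nonneg _
  have key1 : ⟪Cb φ₁ d, d⟫
      = - ⟪(Cb φ₁ - Cb φ₂) epsH1, d⟫ - ⟪(Cb φ₁ - Cb φ₂) (eps1 u₂), d⟫ := by
    have e1 := h1 (u₁ - u₂)
    have e2 := h2 (u₁ - u₂)
    simp only [hddef, map_sub, ContinuousLinearMap.sub_apply, inner_sub_left,
      inner_sub_right] at e1 e2 ⊢
    linarith
  have hce : e ≤ L * a := by
    have hI1 := (innb' ((Cb φ₁ - Cb φ₂) epsH1) d).1
    have hI2 := (innb' ((Cb φ₁ - Cb φ₂) (eps1 u₂)) d).1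
    have hN1 : ‖(Cb φ₁ - Cb φ₂) epsH1‖ ≤ Cl * a * ‖epsH1‖ := opb' _ hCblip' _
    have hN2 : ‖(Cb φ₁ - Cb φ₂) (eps1 u₂)‖ ≤ Cl * a * M1 :=
      (opb' _ hCblip' _).trans (mul_le_mul_of_nonneg_left hu2 (mul_nonneg hCl0 ha))
    have hq2 : C0 * e ^ 2 ≤ (Cl * (‖epsH1‖ + M1) * a) * e := by
      have hco := hCbcoer φ₁ d
      have j1 := mul_le_mul_of_nonneg_right hN1 he
      have j2 := mul_le_mul_of_nonneg_right hN2 he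
      linarith [key1]
    have := quadb' hC0 (by positivity) he hq2
    calc e ≤ Cl * (‖epsH1‖ + M1) * a / C0 := this
      _ = L * a := by rw [hLdef]; ring
  -- Step D: Stage 2 estimate
  set w : W := eps2 v₁ - eps2 v₂ with hwdef
  set s : ℝ := ‖w‖ with hsdef
  have hs0 : 0 ≤ s := norm_nonneg _
  have key2 : ⟪Ch φ₁ w, w⟫
      = ⟪Ch φ₁ (chiOp φ₁ (eps1 u₁)) - Ch φ₂ (chiOp φ₂ (eps1 u₂)), w⟫
        + ⟪(Ch φ₁ - Ch φ₂) epsH2, w⟫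
        - ⟪Ch φ₁ (chiOp φ₁ epsH1) - Ch φ₂ (chiOp φ₂ epsH1), w⟫
        - ⟪(Ch φ₁ - Ch φ₂) (eps2 v₂), w⟫ := by
    have e1 := h3 (v₁ - v₂)
    have e2 := h4 (v₁ - v₂)
    simp only [hwdef, map_sub, ContinuousLinearMap.sub_apply, inner_sub_left,
      inner_sub_right] at e1 e2 ⊢
    linarith
  have split1 : Ch φ₁ (chiOp φ₁ (eps1 u₁)) - Ch φ₂ (chiOp φ₂ (eps1 u₂))
      = Ch φ₁ (chiOp φ₁ d) + Ch φ₁ ((chiOp φ₁ - chiOp φ₂) (eps1 u₂))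
        + (Ch φ₁ - Ch φ₂) (chiOp φ₂ (eps1 u₂)) := by
    simp only [hddef, map_sub, ContinuousLinearMap.sub_apply]
    abel
  have split2 : Ch φ₁ (chiOp φ₁ epsH1) - Ch φ₂ (chiOp φ₂ epsH1)
      = Ch φ₁ ((chiOp φ₁ - chiOp φ₂) epsH1) + (Ch φ₁ - Ch φ₂) (chiOp φ₂ epsH1) := by
    simp only [map_sub, ContinuousLinearMap.sub_apply]
    abel
  have hT1 : ‖Ch φ₁ (chiOp φ₁ (eps1 u₁)) - Ch φ₂ (chiOp φ₂ (eps1 u₂))‖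
      ≤ C1 * (χ0 * e) + C1 * (Cl * a * M1) + Cl * a * (χ0 * M1) := by
    rw [split1]
    refine (norm_add₃_le).trans (add_le_add (add_le_add ?_ ?_) ?_)
    · exact (opb' _ (hChbd φ₁) _).trans (mul_le_mul_of_nonneg_left (opb' _ (hchibd φ₁) _) hC1)
    · exact (opb' _ (hChbd φ₁) _).trans (mul_le_mul_of_nonneg_left
        ((opb' _ hchilip' _).trans (mul_le_mul_of_nonneg_left hu2 (mul_nonneg hCl0 ha))) hC1)
    · exact (opb' _ hChlip' _).trans (mul_le_mul_of_nonneg_left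
        ((opb' _ (hchibd φ₂) _).trans (mul_le_mul_of_nonneg_left hu2 hχ0))
        (mul_nonneg hCl0 ha))
  have hT3 : ‖Ch φ₁ (chiOp φ₁ epsH1) - Ch φ₂ (chiOp φ₂ epsH1)‖
      ≤ C1 * (Cl * a * ‖epsH1‖) + Cl * a * (χ0 * ‖epsH1‖) := by
    rw [split2]
    refine (norm_add_le _ _).trans (add_le_add ?_ ?_)
    · exact (opb' _ (hChbd φ₁) _).trans (mul_le_mul_of_nonneg_left (opb' _ hchilip' _) hC1)
    · exact (opb' _ hChlip' _).trans (mul_le_mul_of_nonneg_left (opb' _ (hchibd φ₂) _)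
        (mul_nonneg hCl0 ha))
  have hT2 : ‖(Ch φ₁ - Ch φ₂) epsH2‖ ≤ Cl * a * ‖epsH2‖ := opb' _ hChlip' _
  have hT4 : ‖(Ch φ₁ - Ch φ₂) (eps2 v₂)‖ ≤ Cl * a * M2 :=
    (opb' _ hChlip' _).trans (mul_le_mul_of_nonneg_left hv2 (mul_nonneg hCl0 ha))
  have hB : C0 * s ^ 2 ≤ (C1 * χ0 * e + K * a) * s := by
    have hc := hChcoer φ₁ w
    have hI1 := (innb' (Ch φ₁ (chiOp φ₁ (eps1 u₁)) - Ch φ₂ (chiOp φ₂ (eps1 u₂))) w).2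
    have hI2 := (innb' ((Ch φ₁ - Ch φ₂) epsH2) w).2
    have hI3 := (innb' (Ch φ₁ (chiOp φ₁ epsH1) - Ch φ₂ (chiOp φ₂ epsH1)) w).1
    have hI4 := (innb' ((Ch φ₁ - Ch φ₂) (eps2 v₂)) w).1
    have j1 := mul_le_mul_of_nonneg_right hT1 hs0
    have j2 := mul_le_mul_of_nonneg_right hT2 hs0
    have j3 := mul_le_mul_of_nonneg_right hT3 hs0
    have j4 := mul_le_mul_of_nonneg_right hT4 hs0
    calc C0 * s ^ 2
        ≤ (C1 * (χ0 * e) + C1 * (Cl * a * M1) + Cl * a * (χ0 * M1)) * s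
          + (Cl * a * ‖epsH2‖) * s
          + (C1 * (Cl * a * ‖epsH1‖) + Cl * a * (χ0 * ‖epsH1‖)) * s
          + (Cl * a * M2) * s := by linarith [key2]
      _ = (C1 * χ0 * e + K * a) * s := by rw [hKdef]; ring
  have hBnn : 0 ≤ C1 * χ0 * e + K * a :=
    add_nonneg (mul_nonneg hCχ he) (mul_nonneg hK ha)
  have hs : s ≤ (C1 * χ0 * e + K * a) / C0 := quadb' hC0 hBnn hs0 hB
  -- assemble
  have hKorn : ‖v₁ - v₂‖ ≤ CK * s := by
    have := hKorn2 (v₁ - v₂)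
    rwa [map_sub] at this
  have hmain : ‖v₁ - v₂‖ ≤ Cf * (e + a) := by
    have h1' : ‖v₁ - v₂‖ ≤ CK * ((C1 * χ0 * e + K * a) / C0) :=
      hKorn.trans (mul_le_mul_of_nonneg_left hs hCK.le)
    have heq : CK * ((C1 * χ0 * e + K * a) / C0) = q * (C1 * χ0 * e + K * a) := by
      rw [hqdef]; ring
    rw [heq] at h1'
    have : q * (C1 * χ0 * e + K * a) ≤ Cf * (e + a) := by
      rw [hCfdef]
      exact assemble' hq hCχ hK he ha
    linarith
  obtain ⟨k1, k2⟩ := assemble2' hCf0 hL he ha hce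
  have hgoal1 : ‖v₁ - v₂‖ ≤ Cf * (L + 1) * (e + a) := le_trans hmain k2
  have hgoal2 : ‖v₁ - v₂‖ ≤ Cf * (L + 1) * a := le_trans hmain k1
  have hmap : ‖eps1 (u₁ - u₂)‖ = e := by rw [hedef, hddef, map_sub]
  exact ⟨by rw [hmap]; exact hgoal1, hgoal2⟩
end

section
/- Under assumptions (A1)–(A5), the Stage 1 solution operator S₁² : L^∞(Ω;ℝ^L) → H¹_{D̄}(Ω;ℝ^d), φ ↦ ū(φ), is Fréchet differentiable, and its derivative at φ in direction h is the unique weak solution v̄ ∈ H¹_{D̄}(Ω;ℝ^d) of ∫_Ω C̄(φ)ε(v̄):ε(ζ) dx + ∫_Ω C̄'(φ)h ε(ū):ε(ζ) dx = 0 for all ζ ∈ H¹_{D̄}. In particular ‖ū(φ+h) − ū(φ) − v̄‖_{H¹(Ω)} ≤ C‖h‖²_{L^∞(Ω)}. -/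
open scoped RealInnerProductSpace


open scoped RealInnerProductSpace in
private lemma laxmilgram_aux {V W : Type*}
    [NormedAddCommGroup V] [InnerProductSpace ℝ V] [CompleteSpace V]
    [NormedAddCommGroup W] [InnerProductSpace ℝ W]
    (eps : V →L[ℝ] W) (A : W →L[ℝ] W) (c : ℝ) (hc : 0 < c)
    (hco : ∀ u : V, c * ‖u‖ * ‖u‖ ≤ ⟪A (eps u), eps u⟫) (w0 : W) :
    ∃! vb : V, ∀ ζ : V, ⟪A (eps vb), eps ζ⟫ + ⟪w0, eps ζ⟫ = 0 := by
  set B : V →L[ℝ] V →L[ℝ] ℝ :=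
    ((ContinuousLinearMap.compL ℝ V W ℝ).flip eps).comp
      ((innerSL ℝ).comp (A.comp eps)) with hBdef
  have hB : ∀ u ζ : V, B u ζ = ⟪A (eps u), eps ζ⟫ := by
    intro u ζ
    rw [hBdef]
    simp
  have coer : IsCoercive B := ⟨c, hc, fun u => (hco u).trans_eq (hB u u).symm⟩
  set G : V →L[ℝ] ℝ := -((innerSL ℝ w0).comp eps) with hGdef
  have hG : ∀ ζ : V, G ζ = -⟪w0, eps ζ⟫ := by
    intro ζ
    rw [hGdef]
    simp
  set f : V := (InnerProductSpace.toDual ℝ V).symm G with hfdef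
  have hf : ∀ ζ : V, ⟪f, ζ⟫ = G ζ := fun ζ => InnerProductSpace.toDual_symm_apply
  refine ⟨coer.continuousLinearEquivOfBilin.symm f, fun ζ => ?_, fun y hy => ?_⟩
  · have h1 : B (coer.continuousLinearEquivOfBilin.symm f) ζ = ⟪f, ζ⟫ := by
      rw [← coer.continuousLinearEquivOfBilin_apply, ContinuousLinearEquiv.apply_symm_apply]
    have h2 := (hf ζ).trans (hG ζ)
    rw [← hB]
    linarith [h1]
  · have key : f = coer.continuousLinearEquivOfBilin y := by
      refine coer.unique_continuousLinearEquivOfBilin (fun w => ?_)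
      rw [hf w, hG w, hB]
      linarith [hy w]
    rw [key, ContinuousLinearEquiv.symm_apply_apply]

set_option maxHeartbeats 1000000 in
/-- **Fréchet differentiability of the Stage 1 solution operator** (Theorem 4.1), in
abstract Hilbert-space form.

`V` models `H¹_{D̄}(Ω;ℝ^d)` (with Korn's inequality `hKorn`), `W` models
`L²(Ω;ℝ^{d×d}_sym)`, `eps` the symmetrized gradient, `P` models `L^∞(Ω;ℝ^L)`.
`Cop φ` is multiplication by `C̄(φ(x))` (assumption (A2)): uniformly coercive, bounded,
Fréchet differentiable with derivative `Cop' φ` (the operator `h ↦ C̄'(φ)h ·`,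
with `‖C̄'(φ)h‖ ≤ C₂‖h‖`) which is Lipschitz with constant `K` (the `C^{1,1}` property,
giving the Taylor bound `‖C̄(φ+h) − C̄(φ) − C̄'(φ)h‖ ≤ K‖h‖²`).  `ū = ū(φ)` is the weak
solution of the Stage 1 system `⟪C̄(φ)ε(ū), ε(ζ)⟫ = Fd(ζ)` for the given data functional.

Conclusion: for every direction `h` the linearised system
`⟪C̄(φ)ε(v̄), ε(ζ)⟫ + ⟪C̄'(φ)h ε(ū), ε(ζ)⟫ = 0 ∀ζ` has a unique weak solution `v̄(h)`,
and there is `C > 0` with the quadratic estimate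
`‖ū(φ+h) − ū(φ) − v̄(h)‖_{H¹} ≤ C ‖h‖²_{L^∞}`: the solution operator `φ ↦ ū(φ)` is
Fréchet differentiable at `φ` with derivative `h ↦ v̄(h)`. -/
theorem stage1_solution_operator_frechet_differentiable
    {V W P : Type*}
    [NormedAddCommGroup V] [InnerProductSpace ℝ V] [CompleteSpace V]
    [NormedAddCommGroup W] [InnerProductSpace ℝ W] [CompleteSpace W]
    [NormedAddCommGroup P] [NormedSpace ℝ P]
    (eps : V →L[ℝ] W)
    (CK : ℝ) (hCK : 0 < CK) (hKorn : ∀ v : V, ‖v‖ ≤ CK * ‖eps v‖)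
    (Cop : P → (W →L[ℝ] W)) (Cop' : P → (P →L[ℝ] (W →L[ℝ] W)))
    (C0 C1 C2 : ℝ) (hC0 : 0 < C0)
    (hcoer : ∀ (φ : P) (w : W), C0 * ‖w‖ ^ 2 ≤ ⟪Cop φ w, w⟫)
    (hbd : ∀ φ : P, ‖Cop φ‖ ≤ C1)
    (hC2 : ∀ (φ : P) (h : P), ‖Cop' φ h‖ ≤ C2 * ‖h‖)
    (hderiv : ∀ φ : P, HasFDerivAt Cop (Cop' φ) φ)
    (K : NNReal) (hK : LipschitzWith K Cop')
    (Fd : V →L[ℝ] ℝ)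
    (φ : P) (ub : V)
    (hub : ∀ ζ : V, ⟪Cop φ (eps ub), eps ζ⟫ = Fd ζ) :
    (∀ h : P, ∃! vb : V, ∀ ζ : V,
        ⟪Cop φ (eps vb), eps ζ⟫ + ⟪Cop' φ h (eps ub), eps ζ⟫ = 0) ∧
    ∃ C : ℝ, 0 < C ∧
      ∀ (h : P) (ubh vb : V),
        (∀ ζ : V, ⟪Cop (φ + h) (eps ubh), eps ζ⟫ = Fd ζ) →
        (∀ ζ : V, ⟪Cop φ (eps vb), eps ζ⟫ + ⟪Cop' φ h (eps ub), eps ζ⟫ = 0) →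
        ‖ubh - ub - vb‖ ≤ C * ‖h‖ ^ 2 := by
  -- replace C2 by its nonnegative part
  set C2' : ℝ := max C2 0 with hC2'def
  have hC2'0 : (0:ℝ) ≤ C2' := le_max_right _ _
  have hC2' : ∀ h : P, ‖Cop' φ h‖ ≤ C2' * ‖h‖ := fun h =>
    (hC2 φ h).trans (mul_le_mul_of_nonneg_right (le_max_left _ _) (norm_nonneg h))
  have hK0 : (0:ℝ) ≤ (K:ℝ) := K.coe_nonneg
  -- Taylor bound from Lipschitz derivative
  have taylor : ∀ h : P, ‖Cop (φ + h) - Cop φ - Cop' φ h‖ ≤ (K:ℝ) * ‖h‖ ^ 2 := by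
    intro h
    have key := Convex.norm_image_sub_le_of_norm_hasFDerivWithin_le'
      (s := Metric.closedBall φ ‖h‖) (C := (K:ℝ) * ‖h‖) (f' := Cop') (φ := Cop' φ)
      (fun x _ => (hderiv x).hasFDerivWithinAt)
      (fun x hx => by
        have h1 : dist (Cop' x) (Cop' φ) ≤ (K:ℝ) * dist x φ := hK.dist_le_mul x φ
        rw [dist_eq_norm (Cop' x), dist_eq_norm x] at h1
        refine h1.trans (mul_le_mul_of_nonneg_left ?_ hK0)
        rw [← dist_eq_norm]; exact Metric.mem_closedBall.mp hx)
      (convex_closedBall _ _)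
      (Metric.mem_closedBall_self (norm_nonneg h))
      ((by simp [Metric.mem_closedBall, dist_eq_norm]) : φ + h ∈ Metric.closedBall φ ‖h‖)
    simpa [add_sub_cancel_left, sq, mul_assoc] using key
  have hKornsq : ∀ v : V, ‖v‖ * ‖v‖ ≤ CK ^ 2 * (‖eps v‖ * ‖eps v‖) := by
    intro v
    have h1 := mul_self_le_mul_self (norm_nonneg v) (hKorn v)
    nlinarith [h1]
  -- energy estimate
  have energy : ∀ (ψ : P) (e : V) (g : W),
      (∀ ζ : V, ⟪Cop ψ (eps e), eps ζ⟫ = ⟪g, eps ζ⟫) → ‖eps e‖ ≤ ‖g‖ / C0 := by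
    intro ψ e g hg
    have h1 : C0 * ‖eps e‖ ^ 2 ≤ ⟪g, eps e⟫ := by rw [← hg e]; exact hcoer ψ (eps e)
    have h2 : ⟪g, eps e⟫ ≤ ‖g‖ * ‖eps e‖ := real_inner_le_norm _ _
    rw [le_div_iff₀ hC0]
    rcases (norm_nonneg (eps e)).eq_or_lt with h0 | h0
    · rw [← h0]; simpa using norm_nonneg g
    · nlinarith
  set M : ℝ := CK * ‖Fd‖ / C0 with hMdef
  have hM0 : 0 ≤ M := by positivity
  -- a priori bound for any solution
  have apriori : ∀ (ψ : P) (u : V),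
      (∀ ζ : V, ⟪Cop ψ (eps u), eps ζ⟫ = Fd ζ) → ‖eps u‖ ≤ M := by
    intro ψ u hu
    have h1 : C0 * ‖eps u‖ ^ 2 ≤ Fd u := by rw [← hu u]; exact hcoer ψ (eps u)
    have h2 : Fd u ≤ ‖Fd‖ * (CK * ‖eps u‖) := by
      calc Fd u ≤ |Fd u| := le_abs_self _
        _ = ‖Fd u‖ := (Real.norm_eq_abs _).symm
        _ ≤ ‖Fd‖ * ‖u‖ := Fd.le_opNorm u
        _ ≤ ‖Fd‖ * (CK * ‖eps u‖) := mul_le_mul_of_nonneg_left (hKorn u) (norm_nonneg Fd)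
    rw [hMdef, le_div_iff₀ hC0]
    rcases (norm_nonneg (eps u)).eq_or_lt with h0 | h0
    · rw [← h0, zero_mul]; positivity
    · nlinarith
  constructor
  · -- Part 1: existence and uniqueness via Lax-Milgram
    intro h
    refine laxmilgram_aux eps (Cop φ) (C0 / CK ^ 2) (by positivity) (fun u => ?_)
      ((Cop' φ h) (eps ub))
    have h1 := hcoer φ (eps u)
    have h2 := hKornsq u
    have h3 : C0 / CK ^ 2 * ‖u‖ * ‖u‖ ≤ C0 * ‖eps u‖ ^ 2 := by
      rw [div_mul_eq_mul_div, div_mul_eq_mul_div, div_le_iff₀ (by positivity)]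
      nlinarith [mul_le_mul_of_nonneg_left h2 hC0.le]
    linarith
  · -- Part 2: the quadratic estimate
    set r : ℝ := CK / C0 with hrdef
    have hr0 : 0 ≤ r := by positivity
    set m : ℝ := M / C0 with hmdef
    have hm0 : 0 ≤ m := by positivity
    set S : ℝ := (K:ℝ) * M + C2' * ((K:ℝ) + C2') * m + 2 * M * C2' with hSdef
    have hS0 : 0 ≤ S := by
      have := mul_nonneg (mul_nonneg hC2'0 (add_nonneg hK0 hC2'0)) hm0
      have := mul_nonneg hK0 hM0
      have := mul_nonneg (mul_nonneg (by norm_num : (0:ℝ) ≤ 2) hM0) hC2'0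
      rw [hSdef]; nlinarith
    refine ⟨r * S + 1, by nlinarith [mul_nonneg hr0 hS0], ?_⟩
    intro h ubh vb hubh hvb
    set t : ℝ := ‖h‖ with htdef
    have ht0 : 0 ≤ t := norm_nonneg h
    have hMubh : ‖eps ubh‖ ≤ M := apriori _ _ hubh
    have hMub : ‖eps ub‖ ≤ M := apriori _ _ hub
    have hD : ‖Cop (φ + h) - Cop φ - Cop' φ h‖ ≤ (K:ℝ) * t ^ 2 := taylor h
    have hopdiff : ‖Cop (φ + h) - Cop φ‖ ≤ (K:ℝ) * t ^ 2 + C2' * t := by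
      have heq : Cop (φ + h) - Cop φ = (Cop (φ + h) - Cop φ - Cop' φ h) + Cop' φ h := by abel
      rw [heq]
      exact (norm_add_le _ _).trans (add_le_add hD (hC2' h))
    -- Lipschitz stability for the solutions
    have hdiffeq : ∀ ζ : V, ⟪Cop φ (eps (ubh - ub)), eps ζ⟫
        = ⟪(Cop φ - Cop (φ + h)) (eps ubh), eps ζ⟫ := by
      intro ζ
      have e1 := hub ζ; have e2 := hubh ζ
      simp only [map_sub, ContinuousLinearMap.sub_apply, inner_sub_left]
      linarith
    set L : ℝ := ‖eps (ubh - ub)‖ with hLdef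
    have hL0 : 0 ≤ L := norm_nonneg _
    have hLbound : L ≤ ((K:ℝ) * t ^ 2 + C2' * t) * m := by
      have h1 : L ≤ ‖(Cop φ - Cop (φ + h)) (eps ubh)‖ / C0 := energy φ _ _ hdiffeq
      have h2 : ‖(Cop φ - Cop (φ + h)) (eps ubh)‖ ≤ ((K:ℝ) * t ^ 2 + C2' * t) * M := by
        refine ((Cop φ - Cop (φ + h)).le_opNorm _).trans ?_
        have h3 : ‖Cop φ - Cop (φ + h)‖ = ‖Cop (φ + h) - Cop φ‖ := norm_sub_rev _ _
        rw [h3]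
        exact mul_le_mul hopdiff hMubh (norm_nonneg _)
          (by positivity)
      calc L ≤ ‖(Cop φ - Cop (φ + h)) (eps ubh)‖ / C0 := h1
        _ ≤ ((K:ℝ) * t ^ 2 + C2' * t) * M / C0 := by gcongr
        _ = ((K:ℝ) * t ^ 2 + C2' * t) * m := by rw [hmdef, hMdef]; ring
    have hL2M : L ≤ 2 * M := by
      have heq : eps (ubh - ub) = eps ubh - eps ub := map_sub _ _ _
      calc L = ‖eps ubh - eps ub‖ := by rw [hLdef, heq]
        _ ≤ ‖eps ubh‖ + ‖eps ub‖ := norm_sub_le _ _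
        _ ≤ 2 * M := by linarith
    -- weak form for the error
    set g : W := -((Cop (φ + h) - Cop φ - Cop' φ h) (eps ubh))
        - (Cop' φ h) (eps (ubh - ub)) with hgdef
    have hmain : ∀ ζ : V, ⟪Cop φ (eps (ubh - ub - vb)), eps ζ⟫ = ⟪g, eps ζ⟫ := by
      intro ζ
      have e1 := hub ζ; have e2 := hubh ζ; have e3 := hvb ζ
      simp only [hgdef, map_sub, ContinuousLinearMap.sub_apply, inner_sub_left,
        inner_add_left, inner_neg_left]
      linarith
    have henergy : ‖eps (ubh - ub - vb)‖ ≤ ‖g‖ / C0 := energy φ _ _ hmain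
    have hgnorm : ‖g‖ ≤ (K:ℝ) * t ^ 2 * M + C2' * t * L := by
      rw [hgdef]
      refine (norm_sub_le _ _).trans (add_le_add ?_ ?_)
      · rw [norm_neg]
        exact ((Cop (φ + h) - Cop φ - Cop' φ h).le_opNorm _).trans
          (mul_le_mul hD hMubh (norm_nonneg _) (by positivity))
      · exact ((Cop' φ h).le_opNorm _).trans
          (mul_le_mul_of_nonneg_right (hC2' h) hL0)
    have hfinal : ‖ubh - ub - vb‖ ≤ r * ‖g‖ := by
      calc ‖ubh - ub - vb‖ ≤ CK * ‖eps (ubh - ub - vb)‖ := hKorn _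
        _ ≤ CK * (‖g‖ / C0) := mul_le_mul_of_nonneg_left henergy hCK.le
        _ = r * ‖g‖ := by rw [hrdef]; ring
    have hg0 : 0 ≤ ‖g‖ := norm_nonneg g
    rcases le_total t 1 with ht1 | ht1
    · have htt : t ^ 2 ≤ t := by nlinarith
      have hL' : L ≤ ((K:ℝ) + C2') * m * t := by nlinarith [mul_nonneg hK0 hm0]
      have h1 : C2' * t * L ≤ C2' * ((K:ℝ) + C2') * m * t ^ 2 := by
        nlinarith [mul_nonneg hC2'0 ht0, hL']
      have h2 : ‖g‖ ≤ ((K:ℝ) * M + C2' * ((K:ℝ) + C2') * m) * t ^ 2 := by nlinarith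
      have h3 := mul_le_mul_of_nonneg_left h2 hr0
      have h4 : 0 ≤ 2 * M * C2' * t ^ 2 := by positivity
      rw [hSdef]
      nlinarith [sq_nonneg t, mul_nonneg hr0 h4]
    · have htt : t ≤ t ^ 2 := by nlinarith
      have h1 : C2' * t * L ≤ 2 * M * C2' * t ^ 2 := by
        nlinarith [mul_nonneg hC2'0 ht0, hL2M, mul_nonneg (mul_nonneg (by norm_num : (0:ℝ) ≤ 2) hM0) hC2'0]
      have h2 : ‖g‖ ≤ ((K:ℝ) * M + 2 * M * C2') * t ^ 2 := by nlinarith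
      have h3 := mul_le_mul_of_nonneg_left h2 hr0
      have h4 : 0 ≤ C2' * ((K:ℝ) + C2') * m * t ^ 2 := by positivity
      rw [hSdef]
      nlinarith [sq_nonneg t, mul_nonneg hr0 h4]
end

section
/- Under assumptions (A1)–(A6), if φ* ∈ U_ad minimises the reduced cost functional J_red over U_ad, then φ* satisfies the variational inequality: for all φ ∈ U_ad, −∫_Ω C̄'(φ*)(φ−φ*)ε(ū*):ε(p̄) dx − ∫_Ω Ĉ'(φ*)(φ−φ*)(ε(û*) − χ(φ*)ε(ū*)):ε(q̂) dx + ∫_Ω Ĉ(φ*)χ'(φ*)(φ−φ*)ε(ū*):ε(q̂) dx + 2γε∫_Ω ∇φ*·∇(φ−φ*) dx + (γ/ε)∫_Ω Ψ̃'(φ*)·(φ−φ*) dx ≥ 0. -/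
open scoped RealInnerProductSpace

/-- **First order necessary optimality condition** (Theorem 4.5), in abstract
Hilbert-space form.

Spaces: `Vphi` models the design space `H¹(Ω;ℝ^L) ∩ L^∞(Ω;ℝ^L)` with gradient
`grad : Vphi →L[ℝ] Wg`; `V1, V2` model `H¹_{D̄}(Ω;ℝ^d)`, `H¹_{D̂}(Ω;ℝ^d)` with
symmetrized gradients `eps1, eps2` into `W = L²(Ω;ℝ^{d×d}_sym)`.

Operators (assumptions (A2), (A4)): `Cb φ, Ch φ` are multiplication by `C̄(φ), Ĉ(φ)`
(self-adjoint, since the tensors satisfy `C_{ijkl} = C_{klij}`), `chiOp φ` is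
multiplication by the scalar fixity `χ(φ)` (self-adjoint and commuting with `Ch φ`), and
`Cb' φ h, Ch' φ h, chi' φ h` are multiplication by `C̄'(φ)h, Ĉ'(φ)h, χ'(φ)h`
respectively, i.e. the directional derivatives.

States: `S1 φ = ū(φ)`, `S2 φ = û(φ)` solve the two-stage systems (`hS1`, `hS2`), and
`S1, S2` are Fréchet differentiable at the minimiser `φ*` with derivatives `DS1, DS2`
characterised by the linearised systems (`hlin1`, `hlin2`) — Theorems 4.1 and 4.3.

Cost: `Jred φ = (1/2)∫_{Γ^tar} W(û(φ) − u^tar)·(û(φ) − u^tar) + γ∫_Ω(ε|∇φ|² + ε⁻¹Ψ(φ))`,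
written via the bounded symmetric bilinear form `B` (with `B û ζ − ℓ ζ` the derivative
pairing `∫ W(û − u^tar)·ζ`), the constant `c`, and `PsiInt φ = ∫ Ψ̃(φ)` with directional
derivative `PsiDer φ ψ = ∫ Ψ̃'(φ)·ψ`.

Adjoints: `q̂` and `p̄` solve the adjoint systems \eqref{wf:adj:q}, \eqref{wf:adj:p}.

Conclusion: if `φ* ∈ U_ad` minimises `Jred` over the convex set `U_ad`, then for all
`φ ∈ U_ad` the variational inequality \eqref{foc:final} holds:
`−⟪C̄'(φ*)(φ−φ*)ε(ū*), ε(p̄)⟫ − ⟪Ĉ'(φ*)(φ−φ*)(ε(û*) − χ(φ*)ε(ū*)), ε(q̂)⟫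
 + ⟪Ĉ(φ*)χ'(φ*)(φ−φ*)ε(ū*), ε(q̂)⟫ + 2γε⟪∇φ*, ∇(φ−φ*)⟫ + (γ/ε) PsiDer φ* (φ−φ*) ≥ 0`. -/
theorem first_order_optimality_condition
    {Vphi V1 V2 W Wg : Type*}
    [NormedAddCommGroup Vphi] [InnerProductSpace ℝ Vphi] [CompleteSpace Vphi]
    [NormedAddCommGroup V1] [InnerProductSpace ℝ V1] [CompleteSpace V1]
    [NormedAddCommGroup V2] [InnerProductSpace ℝ V2] [CompleteSpace V2]
    [NormedAddCommGroup W] [InnerProductSpace ℝ W] [CompleteSpace W]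
    [NormedAddCommGroup Wg] [InnerProductSpace ℝ Wg] [CompleteSpace Wg]
    (eps1 : V1 →L[ℝ] W) (eps2 : V2 →L[ℝ] W) (grad : Vphi →L[ℝ] Wg)
    (Cb Ch chiOp : Vphi → (W →L[ℝ] W))
    (Cb' Ch' chi' : Vphi → (Vphi →L[ℝ] (W →L[ℝ] W)))
    (F1 : V1 →L[ℝ] ℝ) (F2 : V2 →L[ℝ] ℝ)
    (B : V2 →L[ℝ] V2 →L[ℝ] ℝ) (ℓ : V2 →L[ℝ] ℝ) (c γ ε : ℝ)
    (hγ : 0 < γ) (hε : 0 < ε)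
    (hBsymm : ∀ u v : V2, B u v = B v u)
    (PsiInt : Vphi → ℝ) (PsiDer : Vphi → Vphi →L[ℝ] ℝ)
    (S1 : Vphi → V1) (S2 : Vphi → V2)
    (hS1 : ∀ (φ : Vphi) (ζ : V1), ⟪Cb φ (eps1 (S1 φ)), eps1 ζ⟫ = F1 ζ)
    (hS2 : ∀ (φ : Vphi) (ζ : V2),
      ⟪Ch φ (eps2 (S2 φ)), eps2 ζ⟫ - ⟪Ch φ (chiOp φ (eps1 (S1 φ))), eps2 ζ⟫ = F2 ζ)
    (Uad : Set Vphi) (hconv : Convex ℝ Uad)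
    (φs : Vphi) (hφs : φs ∈ Uad)
    (hPsi : ∀ ψ : Vphi, HasDerivAt (fun t : ℝ => PsiInt (φs + t • ψ)) (PsiDer φs ψ) 0)
    (hCbsa : ∀ w w' : W, ⟪Cb φs w, w'⟫ = ⟪w, Cb φs w'⟫)
    (hChsa : ∀ w w' : W, ⟪Ch φs w, w'⟫ = ⟪w, Ch φs w'⟫)
    (hchisa : ∀ w w' : W, ⟪chiOp φs w, w'⟫ = ⟪w, chiOp φs w'⟫)
    (hcomm : (Ch φs).comp (chiOp φs) = (chiOp φs).comp (Ch φs))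
    (DS1 : Vphi →L[ℝ] V1) (DS2 : Vphi →L[ℝ] V2)
    (hDS1 : HasFDerivAt S1 DS1 φs) (hDS2 : HasFDerivAt S2 DS2 φs)
    (hlin1 : ∀ (h : Vphi) (ζ : V1),
      ⟪Cb φs (eps1 (DS1 h)), eps1 ζ⟫ + ⟪Cb' φs h (eps1 (S1 φs)), eps1 ζ⟫ = 0)
    (hlin2 : ∀ (h : Vphi) (ζ : V2),
      ⟪Ch φs (eps2 (DS2 h) - chi' φs h (eps1 (S1 φs)) - chiOp φs (eps1 (DS1 h))),
          eps2 ζ⟫ +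
        ⟪Ch' φs h (eps2 (S2 φs) - chiOp φs (eps1 (S1 φs))), eps2 ζ⟫ = 0)
    (Jred : Vphi → ℝ)
    (hJred : ∀ φ : Vphi, Jred φ =
      (1 / 2) * B (S2 φ) (S2 φ) - ℓ (S2 φ) + c
        + γ * (ε * ⟪grad φ, grad φ⟫ + ε⁻¹ * PsiInt φ))
    (hmin : ∀ φ ∈ Uad, Jred φs ≤ Jred φ)
    (qh : V2) (pb : V1)
    (hq : ∀ ζ : V2, ⟪Ch φs (eps2 qh), eps2 ζ⟫ = B (S2 φs) ζ - ℓ ζ)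
    (hp : ∀ ζ : V1, ⟪Cb φs (eps1 pb), eps1 ζ⟫ = ⟪Ch φs (chiOp φs (eps2 qh)), eps1 ζ⟫) :
    ∀ φ ∈ Uad,
      -⟪Cb' φs (φ - φs) (eps1 (S1 φs)), eps1 pb⟫
        - ⟪Ch' φs (φ - φs) (eps2 (S2 φs) - chiOp φs (eps1 (S1 φs))), eps2 qh⟫
        + ⟪Ch φs (chi' φs (φ - φs) (eps1 (S1 φs))), eps2 qh⟫
        + 2 * γ * ε * ⟪grad φs, grad (φ - φs)⟫
        + (γ / ε) * PsiDer φs (φ - φs) ≥ 0 := by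
  intro φ hφ
  set h : Vphi := φ - φs with hh
  -- adjoint identities
  have e1 : ⟪Cb φs (eps1 pb), eps1 (DS1 h)⟫ = -⟪Cb' φs h (eps1 (S1 φs)), eps1 pb⟫ := by
    have h1 := hlin1 h pb
    have sym : ⟪Cb φs (eps1 (DS1 h)), eps1 pb⟫ = ⟪Cb φs (eps1 pb), eps1 (DS1 h)⟫ := by
      rw [hCbsa, real_inner_comm]
    linarith
  have e2 : ⟪Ch φs (chiOp φs (eps2 qh)), eps1 (DS1 h)⟫
      = ⟪Cb φs (eps1 pb), eps1 (DS1 h)⟫ := (hp (DS1 h)).symm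
  have hcomm' : ∀ w : W, chiOp φs (Ch φs w) = Ch φs (chiOp φs w) := fun w =>
    (congrArg (fun T : W →L[ℝ] W => T w) hcomm).symm
  have e3 : ⟪Ch φs (chiOp φs (eps1 (DS1 h))), eps2 qh⟫
      = ⟪Ch φs (chiOp φs (eps2 qh)), eps1 (DS1 h)⟫ := by
    rw [hChsa, hchisa, hcomm', real_inner_comm]
  have e4 := hlin2 h qh
  rw [map_sub, map_sub, inner_sub_left, inner_sub_left] at e4
  have e5 : ⟪Ch φs (eps2 (DS2 h)), eps2 qh⟫ = ⟪Ch φs (eps2 qh), eps2 (DS2 h)⟫ := by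
    rw [hChsa, real_inner_comm]
  have e6 : ⟪Ch φs (eps2 qh), eps2 (DS2 h)⟫ = B (S2 φs) (DS2 h) - ℓ (DS2 h) := hq (DS2 h)
  -- key identity: cost-derivative = adjoint expression
  have key : B (S2 φs) (DS2 h) - ℓ (DS2 h)
      = -⟪Cb' φs h (eps1 (S1 φs)), eps1 pb⟫
        - ⟪Ch' φs h (eps2 (S2 φs) - chiOp φs (eps1 (S1 φs))), eps2 qh⟫
        + ⟪Ch φs (chi' φs h (eps1 (S1 φs))), eps2 qh⟫ := by linarith
  -- derivative of t ↦ Jred (φs + t • h) at 0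
  have hc : HasDerivAt (fun t : ℝ => φs + t • h) h 0 := by
    simpa using (((hasDerivAt_id (0:ℝ)).smul_const h).const_add φs)
  have hc0 : (φs + (0:ℝ) • h) = φs := by simp
  have hDS2' : HasFDerivAt S2 DS2 (φs + (0:ℝ) • h) := by rw [hc0]; exact hDS2
  have hu : HasDerivAt (fun t : ℝ => S2 (φs + t • h)) (DS2 h) 0 := by
    exact hDS2'.comp_hasDerivAt 0 hc
  have hu0 : S2 (φs + (0:ℝ) • h) = S2 φs := by rw [hc0]
  have hB1 : HasDerivAt (fun t : ℝ => B (S2 (φs + t • h))) (B (DS2 h)) 0 := by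
    have := B.hasFDerivAt.comp_hasDerivAt 0 hu
    exact this
  have hBB : HasDerivAt (fun t : ℝ => B (S2 (φs + t • h)) (S2 (φs + t • h)))
      (B (DS2 h) (S2 φs) + B (S2 φs) (DS2 h)) 0 := by
    have := hB1.clm_apply hu
    rw [hu0] at this
    exact this
  have hL : HasDerivAt (fun t : ℝ => ℓ (S2 (φs + t • h))) (ℓ (DS2 h)) 0 :=
    ℓ.hasFDerivAt.comp_hasDerivAt 0 hu
  have hv : HasDerivAt (fun t : ℝ => grad (φs + t • h)) (grad h) 0 :=
    grad.hasFDerivAt.comp_hasDerivAt 0 hc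
  have hG : HasDerivAt (fun t : ℝ => ⟪grad (φs + t • h), grad (φs + t • h)⟫)
      (⟪grad φs, grad h⟫ + ⟪grad h, grad φs⟫) 0 := by
    have := HasDerivAt.inner ℝ hv hv
    rw [hc0] at this
    exact this
  have hP := hPsi h
  have hg : HasDerivAt (fun t : ℝ => Jred (φs + t • h))
      ((1/2) * (B (DS2 h) (S2 φs) + B (S2 φs) (DS2 h)) - ℓ (DS2 h)
        + γ * (ε * (⟪grad φs, grad h⟫ + ⟪grad h, grad φs⟫) + ε⁻¹ * PsiDer φs h)) 0 := by
    have heq : (fun t : ℝ => Jred (φs + t • h)) = fun t : ℝ =>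
        (1/2) * B (S2 (φs + t • h)) (S2 (φs + t • h)) - ℓ (S2 (φs + t • h)) + c
          + γ * (ε * ⟪grad (φs + t • h), grad (φs + t • h)⟫ + ε⁻¹ * PsiInt (φs + t • h)) :=
      funext fun t => hJred _
    rw [heq]
    exact (((hBB.const_mul (1/2 : ℝ)).sub hL).add_const c).add
      (((hG.const_mul ε).add (hP.const_mul ε⁻¹)).const_mul γ)
  -- one-sided minimality gives derivative ≥ 0
  have hmem : ∀ t ∈ Set.Ioc (0:ℝ) 1, φs + t • h ∈ Uad := by
    intro t ht
    obtain ⟨ht0, ht1⟩ := ht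
    have : φs + t • h = (1 - t) • φs + t • φ := by
      rw [hh]; module
    rw [this]
    exact hconv hφs hφ (by linarith) ht0.le (by ring)
  have hD : 0 ≤ (1/2) * (B (DS2 h) (S2 φs) + B (S2 φs) (DS2 h)) - ℓ (DS2 h)
      + γ * (ε * (⟪grad φs, grad h⟫ + ⟪grad h, grad φs⟫) + ε⁻¹ * PsiDer φs h) := by
    have hslope := hasDerivWithinAt_iff_tendsto_slope.mp (hg.hasDerivWithinAt (s := Set.Ioi 0))
    have hIoi : Set.Ioi (0:ℝ) \ {0} = Set.Ioi 0 :=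
      Set.diff_singleton_eq_self (by simp)
    rw [hIoi] at hslope
    refine le_of_tendsto_of_tendsto tendsto_const_nhds hslope ?_
    filter_upwards [self_mem_nhdsWithin,
      eventually_nhdsWithin_of_eventually_nhds (eventually_lt_nhds zero_lt_one)] with t ht ht1
    have ht0 : (0:ℝ) < t := ht
    have hmin' : Jred φs ≤ Jred (φs + t • h) :=
      hmin _ (hmem t ⟨ht0, le_of_lt ht1⟩)
    have hsl : slope (fun t : ℝ => Jred (φs + t • h)) 0 t
        = t⁻¹ * (Jred (φs + t • h) - Jred φs) := by
      simp [slope, hc0]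
    rw [hsl]
    exact mul_nonneg (inv_nonneg.mpr ht0.le) (by linarith)
  have hBs := hBsymm (DS2 h) (S2 φs)
  have hGs : ⟪grad h, grad φs⟫ = ⟪grad φs, grad h⟫ := real_inner_comm _ _
  rw [ge_iff_le, div_eq_mul_inv]
  rw [hBs, hGs] at hD
  nlinarith [hD, key]
end
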